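/- arXiv:2001.08405 — 4 statements merged into one kernel-verified Lean document; each statement's English description precedes it below -/
import Mathlib

section
/- Let α, β ∈ ℂ and let |Φ⟩ := (α/√2)(|0000⟩+|1111⟩) + (β/√6)(|0011⟩+|0101⟩+|0110⟩+|1001⟩+|1010⟩+|1100⟩) ∈ (ℂ²)^{⊗4}, and set ρ := |Φ⟩⟨Φ|. Then for every i ∈ {1,2,3,4}, Tr_i(ρ) = (1/2)|Φ₀⟩⟨Φ₀| + (1/2)|Φ₁⟩⟨Φ₁|, where |Φ₀⟩ := α|000⟩ + (β/√3)(|011⟩+|101⟩+|110⟩) and |Φ₁⟩ := α|111⟩ + (β/√3)(|001⟩+|010⟩+|100⟩). -/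
/- Common setup: (ℂ²)^{⊗n} is modeled as functions {0,1}ⁿ → ℂ, with computational
basis kets, outer products |u⟩⟨v|, and the partial trace over the i-th tensor factor. -/

open Matrix
open scoped ComplexConjugate

noncomputable section

/-- The computational basis ket `|s⟩` for a bit string `s ∈ {0,1}ⁿ`. -/
def ket {n : ℕ} (s : Fin n → Fin 2) : (Fin n → Fin 2) → ℂ :=
  fun x => if x = s then 1 else 0

/-- The outer product `|u⟩⟨v|`. -/
def outer {ι : Type*} (u v : ι → ℂ) : Matrix ι ι ℂ :=
  Matrix.of fun i j => u i * conj (v j)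

/-- The partial trace over the `i`-th tensor factor (the single deletion error `D_i`);
it satisfies `ptrace i (A₁ ⊗ ⋯ ⊗ Aₙ) = Tr(A_i) • A₁ ⊗ ⋯ ⊗ A_{i-1} ⊗ A_{i+1} ⊗ ⋯ ⊗ Aₙ`. -/
def ptrace {m : ℕ} (i : Fin (m + 1))
    (A : Matrix (Fin (m + 1) → Fin 2) (Fin (m + 1) → Fin 2) ℂ) :
    Matrix (Fin m → Fin 2) (Fin m → Fin 2) ℂ :=
  Matrix.of fun y y' => ∑ b : Fin 2, A (i.insertNth b y) (i.insertNth b y')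

/-- The codeword `|Φ⟩ = (α/√2)(|0000⟩+|1111⟩) + (β/√6)(|0011⟩+|0101⟩+|0110⟩+|1001⟩+|1010⟩+|1100⟩)`. -/
def Phi (α β : ℂ) : (Fin 4 → Fin 2) → ℂ :=
  (α / (Real.sqrt 2 : ℂ)) • (ket ![0,0,0,0] + ket ![1,1,1,1])
    + (β / (Real.sqrt 6 : ℂ)) •
        (ket ![0,0,1,1] + ket ![0,1,0,1] + ket ![0,1,1,0]
          + ket ![1,0,0,1] + ket ![1,0,1,0] + ket ![1,1,0,0])

/-- `|Φ₀⟩ = α|000⟩ + (β/√3)(|011⟩+|101⟩+|110⟩)`. -/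
def Phi0 (α β : ℂ) : (Fin 3 → Fin 2) → ℂ :=
  α • ket ![0,0,0]
    + (β / (Real.sqrt 3 : ℂ)) • (ket ![0,1,1] + ket ![1,0,1] + ket ![1,1,0])

/-- `|Φ₁⟩ = α|111⟩ + (β/√3)(|001⟩+|010⟩+|100⟩)`. -/
def Phi1 (α β : ℂ) : (Fin 3 → Fin 2) → ℂ :=
  α • ket ![1,1,1]
    + (β / (Real.sqrt 3 : ℂ)) • (ket ![0,0,1] + ket ![0,1,0] + ket ![1,0,0])

lemma s6 : (Real.sqrt 6 : ℂ) = (Real.sqrt 2 : ℂ) * (Real.sqrt 3 : ℂ) := by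
  rw [← Complex.ofReal_mul, ← Real.sqrt_mul (by norm_num)]; norm_num

set_option maxHeartbeats 4000000 in
lemma phi_insert (α β : ℂ) (i : Fin 4) (b : Fin 2) (y : Fin 3 → Fin 2) :
    Phi α β (i.insertNth b y)
      = (1 / (Real.sqrt 2 : ℂ)) * (if b = 0 then Phi0 α β y else Phi1 α β y) := by
  obtain ⟨a, c, d, rfl⟩ : ∃ a c d, y = ![a, c, d] :=
    ⟨y 0, y 1, y 2, by ext j; fin_cases j <;> rfl⟩
  have h2 : (Real.sqrt 2 : ℂ) ≠ 0 := by
    norm_num [Complex.ofReal_ne_zero, Real.sqrt_ne_zero']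
  have h3 : (Real.sqrt 3 : ℂ) ≠ 0 := by
    norm_num [Complex.ofReal_ne_zero, Real.sqrt_ne_zero']
  fin_cases i <;> fin_cases b <;> fin_cases a <;> fin_cases c <;> fin_cases d <;>
    · simp (config := { decide := true }) only [Phi, Phi0, Phi1, ket, s6, Pi.add_apply,
        Pi.smul_apply, smul_eq_mul, if_true, if_false, ite_true, ite_false]
      field_simp
      try ring

/-- for every `i`, `Tr_i(|Φ⟩⟨Φ|) = ½|Φ₀⟩⟨Φ₀| + ½|Φ₁⟩⟨Φ₁|`. -/
theorem deletion_of_codeword (α β : ℂ) (i : Fin 4) :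
    ptrace i (outer (Phi α β) (Phi α β))
      = ((1 : ℂ) / 2) • outer (Phi0 α β) (Phi0 α β)
        + ((1 : ℂ) / 2) • outer (Phi1 α β) (Phi1 α β) := by
  have hs : ((Real.sqrt 2 : ℝ) : ℂ) * ((Real.sqrt 2 : ℝ) : ℂ) = 2 := by
    rw [← Complex.ofReal_mul, Real.mul_self_sqrt (by norm_num)]; norm_num
  ext y y'
  simp only [ptrace, outer, Matrix.of_apply, Matrix.add_apply, Matrix.smul_apply,
    smul_eq_mul, Fin.sum_univ_two, phi_insert, if_true, if_false, ite_true, ite_false,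
    Fin.one_eq_zero_iff, OfNat.ofNat_ne_one, one_ne_zero, _root_.map_mul, map_div₀,
    _root_.map_one, Complex.conj_ofReal]
  have key : (1 / ((Real.sqrt 2 : ℝ) : ℂ)) * (1 / ((Real.sqrt 2 : ℝ) : ℂ)) = 1 / 2 := by
    rw [div_mul_div_comm, one_mul, hs]
  norm_num
  linear_combination (Phi0 α β y * conj (Phi0 α β y') + Phi1 α β y * conj (Phi1 α β y')) * key

end
end

section
/- Let α, β ∈ ℂ and let |Φ⟩ := (α/√2)(|0000⟩+|1111⟩) + (β/√6)(|0011⟩+|0101⟩+|0110⟩+|1001⟩+|1010⟩+|1100⟩) ∈ (ℂ²)^{⊗4}, and set ρ := |Φ⟩⟨Φ|. Then the four single-deletion outputs all coincide: Tr_1(ρ) = Tr_2(ρ) = Tr_3(ρ) = Tr_4(ρ). -/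
/- Common setup: (ℂ²)^{⊗n} is modeled as functions {0,1}ⁿ → ℂ, with computational
basis kets, outer products |u⟩⟨v|, and the partial trace over the i-th tensor factor. -/

open Matrix
open scoped ComplexConjugate

noncomputable section

/-- Coefficient as a function of Hamming weight. -/
def Fcoef (α β : ℂ) : ℕ → ℂ :=
  fun k => if k = 0 ∨ k = 4 then α / (Real.sqrt 2 : ℂ)
    else if k = 2 then β / (Real.sqrt 6 : ℂ) else 0

/-- Hamming weight. -/
def wt {n : ℕ} (x : Fin n → Fin 2) : ℕ := ∑ i, (x i : ℕ)

lemma phi_eq_wt (α β : ℂ) (x : Fin 4 → Fin 2) :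
    Phi α β x = Fcoef α β (wt x) := by
  have hx : x = ![x 0, x 1, x 2, x 3] := by
    funext i; fin_cases i <;> rfl
  rw [hx]
  generalize x 0 = a; generalize x 1 = b; generalize x 2 = c; generalize x 3 = d
  fin_cases a <;> fin_cases b <;> fin_cases c <;> fin_cases d <;>
    simp (config := { decide := true })
      [Phi, ket, Fcoef, wt, Fin.sum_univ_four, Pi.add_apply, Pi.smul_apply]

lemma wt_insertNth {m : ℕ} (i : Fin (m + 1)) (b : Fin 2) (y : Fin m → Fin 2) :
    wt (i.insertNth b y) = (b : ℕ) + wt y := by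
  unfold wt
  rw [Fin.sum_univ_succAbove _ i]
  simp [Fin.insertNth_apply_same, Fin.insertNth_apply_succAbove]

lemma ptrace_phi (α β : ℂ) (i : Fin 4) :
    ptrace i (outer (Phi α β) (Phi α β))
      = Matrix.of fun y y' => ∑ b : Fin 2,
          Fcoef α β ((b : ℕ) + wt y) * conj (Fcoef α β ((b : ℕ) + wt y')) := by
  ext y y'
  simp [ptrace, outer, phi_eq_wt, wt_insertNth]

/-- the four single-deletion outputs coincide:
`Tr_1(ρ) = Tr_2(ρ) = Tr_3(ρ) = Tr_4(ρ)` for `ρ = |Φ⟩⟨Φ|`. -/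
theorem deletion_outputs_coincide (α β : ℂ) :
    ptrace (0 : Fin 4) (outer (Phi α β) (Phi α β))
        = ptrace (1 : Fin 4) (outer (Phi α β) (Phi α β))
      ∧ ptrace (1 : Fin 4) (outer (Phi α β) (Phi α β))
        = ptrace (2 : Fin 4) (outer (Phi α β) (Phi α β))
      ∧ ptrace (2 : Fin 4) (outer (Phi α β) (Phi α β))
        = ptrace (3 : Fin 4) (outer (Phi α β) (Phi α β)) := by
  refine ⟨?_, ?_, ?_⟩ <;> rw [ptrace_phi, ptrace_phi]

end
end

section
/- There is no [3,1] single quantum deletion error-correcting code: there do not exist a linear isometry Enc : ℂ² → (ℂ²)^{⊗3} and a CPTP map N from 4×4 complex matrices to 2×2 complex matrices such that N(Tr_i(Enc|φ⟩⟨φ|Enc†)) = |φ⟩⟨φ| for every unit vector |φ⟩ ∈ ℂ² and every i ∈ {1,2,3}. -/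
/- Common setup: (ℂ²)^{⊗n} is modeled as functions {0,1}ⁿ → ℂ, with computational
basis kets, outer products |u⟩⟨v|, and the partial trace over the i-th tensor factor. -/

open Matrix
open scoped ComplexConjugate ComplexOrder

noncomputable section

/-- The Choi matrix `Σ_{i,j} E_{ij} ⊗ N(E_{ij})` of a linear map `N` on matrices. -/
def choi {ι κ : Type*} [Fintype ι] [DecidableEq ι]
    (N : Matrix ι ι ℂ →ₗ[ℂ] Matrix κ κ ℂ) : Matrix (ι × κ) (ι × κ) ℂ :=
  Matrix.of fun p q => N (Matrix.single p.1 q.1 1) p.2 q.2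

/-- A linear map on matrices is CPTP if its Choi matrix is positive semidefinite
(complete positivity) and it preserves traces. -/
def IsCPTP {ι κ : Type*} [Fintype ι] [DecidableEq ι] [Fintype κ]
    (N : Matrix ι ι ℂ →ₗ[ℂ] Matrix κ κ ℂ) : Prop :=
  (choi N).PosSemidef ∧ ∀ A : Matrix ι ι ℂ, (N A).trace = A.trace

/-- Existence of an `[m+1, 1]` single quantum deletion error-correcting code:
a linear isometry `Enc : ℂ² → (ℂ²)^{⊗(m+1)}` (given by a matrix `E` with `EᴴE = 1`)
and a CPTP map `N` from `2^m × 2^m` matrices to `2 × 2` matrices such that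
`N(Tr_i(E|φ⟩⟨φ|Eᴴ)) = |φ⟩⟨φ|` for every unit vector `|φ⟩ ∈ ℂ²` and every deletion
position `i`. -/
def HasDelCode (m : ℕ) : Prop :=
  ∃ (E : Matrix (Fin (m + 1) → Fin 2) (Fin 2) ℂ)
    (N : Matrix (Fin m → Fin 2) (Fin m → Fin 2) ℂ →ₗ[ℂ] Matrix (Fin 2) (Fin 2) ℂ),
    Eᴴ * E = 1 ∧ IsCPTP N ∧
      ∀ φ : Fin 2 → ℂ, (∑ j, star (φ j) * φ j) = 1 →
        ∀ i : Fin (m + 1),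
          N (ptrace i (E * outer φ φ * Eᴴ)) = outer φ φ

/-!
A recovery map for all three deletions makes the code words `c = E|0⟩`, `d = E|1⟩` satisfy the
Knill–Laflamme conditions for the Kraus operators `⟨b|ᵢ` of the deletions: every slice of `c`
(its amplitudes with one qubit fixed) is orthogonal to every slice of `d`, and across each qubit
the slices of `c` and of `d` have the same Gram matrix.

If the two slices of `c` across some qubit are dependent, then `c` and `d` factor across that
qubit with the same first factor, and the two-qubit second factors `g`, `G` satisfy
`g gᴴ = G Gᴴ` and `gᴴ G = 0`, which forces `g = 0`. Otherwise the slices of `c` across every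
qubit span the orthogonal complement of the two-dimensional span of the slices of `d` across the
first one. Comparing coefficients then shows that `c` is invariant under cyclic shifts of the
qubits, hence symmetric, and so is `d`. But then both spans lie in the symmetric subspace of
`ℂ² ⊗ ℂ²`, whereas together they fill the whole space.
-/

open scoped InnerProductSpace

section LinearAlgebra

variable {𝕜 E F : Type*} [RCLike 𝕜] [NormedAddCommGroup E] [InnerProductSpace 𝕜 E]
  [NormedAddCommGroup F] [InnerProductSpace 𝕜 F] {ι : Type*} [Fintype ι]

theorem sum_smul_eq_zero_of_inner_eq {u : ι → E} {v : ι → F}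
    (h : ∀ k l, ⟪u k, u l⟫_𝕜 = ⟪v k, v l⟫_𝕜) {a : ι → 𝕜} (hu : ∑ k, a k • u k = 0) :
    ∑ k, a k • v k = 0 := by
  rw [← inner_self_eq_zero (𝕜 := 𝕜)] at hu ⊢
  simpa only [sum_inner, inner_sum, inner_smul_left, inner_smul_right, h] using hu

theorem linearIndependent_iff_of_inner_eq {u : ι → E} {v : ι → F}
    (h : ∀ k l, ⟪u k, u l⟫_𝕜 = ⟪v k, v l⟫_𝕜) :
    LinearIndependent 𝕜 u ↔ LinearIndependent 𝕜 v := by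
  simp only [Fintype.linearIndependent_iff]
  exact ⟨fun hu a ha => hu a (sum_smul_eq_zero_of_inner_eq (fun k l => (h k l).symm) ha),
    fun hv a ha => hv a (sum_smul_eq_zero_of_inner_eq h ha)⟩

theorem span_range_eq_orthogonal [FiniteDimensional 𝕜 E] {ι' : Type*} [Fintype ι']
    {u : ι → E} {v : ι' → E} (hu : LinearIndependent 𝕜 u) (hv : LinearIndependent 𝕜 v)
    (huv : ∀ k l, ⟪u k, v l⟫_𝕜 = 0)
    (hdim : Fintype.card ι + Fintype.card ι' = Module.finrank 𝕜 E) :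
    Submodule.span 𝕜 (Set.range u) = (Submodule.span 𝕜 (Set.range v))ᗮ := by
  refine Submodule.eq_of_le_of_finrank_eq (Submodule.isOrtho_iff_le.1 ?_) ?_
  · rw [Submodule.isOrtho_span]
    rintro _ ⟨k, rfl⟩ _ ⟨l, rfl⟩
    exact huv k l
  · have := (Submodule.span 𝕜 (Set.range v)).finrank_add_finrank_orthogonal
    rw [finrank_span_eq_card hu]
    rw [finrank_span_eq_card hv] at this
    omega

end LinearAlgebra

theorem exists_eq_smul_of_sum_smul_eq_zero {K M : Type*} [Field K] [AddCommGroup M]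
    [Module K M] {g : Fin 2 → K} (hg : g ≠ 0) {u : Fin 2 → M} (hu : ∑ k, g k • u k = 0) :
    ∃ w, ∀ k, u k = ![-g 1, g 0] k • w := by
  rw [Fin.sum_univ_two] at hu
  by_cases h0 : g 0 = 0
  · have h1 : g 1 ≠ 0 := fun h1 => hg (funext fun k => by fin_cases k <;> assumption)
    refine ⟨-(g 1)⁻¹ • u 0, fun k => ?_⟩
    fin_cases k
    · simp [h1]
    · simpa [h0, h1] using hu
  · refine ⟨(g 0)⁻¹ • u 1, fun k => ?_⟩
    fin_cases k
    · calc u 0 = (g 0)⁻¹ • (g 0 • u 0) := (inv_smul_smul₀ h0 _).symm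
        _ = (g 0)⁻¹ • -(g 1 • u 1) := by rw [eq_neg_of_add_eq_zero_left hu]
        _ = _ := by simp only [Fin.zero_eta, Matrix.cons_val_zero]; module
    · simp [h0]

theorem Matrix.eq_zero_of_mul_conjTranspose_eq_of_conjTranspose_mul_eq_zero {𝕜 : Type*}
    [RCLike 𝕜] {m n : Type*} [Fintype m] [Fintype n] {A B : Matrix m n 𝕜}
    (h : A * Aᴴ = B * Bᴴ) (h' : Aᴴ * B = 0) : A = 0 := by
  -- `(Aᴴ A)² = Aᴴ B Bᴴ A = 0`
  have : (Aᴴ * A)ᴴ * (Aᴴ * A) = 0 := by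
    rw [conjTranspose_mul, conjTranspose_conjTranspose, Matrix.mul_assoc, ← Matrix.mul_assoc A,
      h, ← Matrix.mul_assoc, ← Matrix.mul_assoc, h', Matrix.zero_mul, Matrix.zero_mul]
  exact conjTranspose_mul_self_eq_zero.1 (conjTranspose_mul_self_eq_zero.1 this)

theorem Matrix.col_ne_zero_of_conjTranspose_mul_self_eq_one {𝕜 ι κ : Type*} [RCLike 𝕜]
    [Fintype ι] [DecidableEq κ] {E : Matrix ι κ 𝕜} (hE : Eᴴ * E = 1) (k : κ) : E.col k ≠ 0 := by
  intro h
  have := congr($hE k k)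
  simp_all [mul_apply, funext_iff]

section Choi

variable {ι κ : Type*} [Fintype ι] [DecidableEq ι]

theorem outer_eq_vecMulVec (x y : κ → ℂ) : outer x y = vecMulVec x (star y) := rfl

def choiVec (x : ι → ℂ) (χ : κ → ℂ) : ι × κ → ℂ := fun p => conj (x p.1) * χ p.2

theorem map_apply_eq_sum_choi (N : Matrix ι ι ℂ →ₗ[ℂ] Matrix κ κ ℂ) (A : Matrix ι ι ℂ)
    (p q : κ) : N A p q = ∑ a, ∑ b, A a b * choi N (a, p) (b, q) := by
  have h : ∀ a b, single a b (A a b) = A a b • single a b (1 : ℂ) := by simp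
  conv_lhs => rw [matrix_eq_sum_single A]
  simp only [h, map_sum, map_smul, Matrix.sum_apply, Matrix.smul_apply, smul_eq_mul, choi,
    Matrix.of_apply]

variable [Fintype κ]

theorem star_dotProduct_outer_mulVec (φ ψ χ χ' : κ → ℂ) :
    star χ' ⬝ᵥ (outer φ ψ *ᵥ χ) = (star χ' ⬝ᵥ φ) * (star ψ ⬝ᵥ χ) := by
  have : outer φ ψ *ᵥ χ = (star ψ ⬝ᵥ χ) • φ := by
    ext i
    simp only [mulVec, dotProduct, outer, of_apply, Pi.smul_apply, smul_eq_mul, Finset.sum_mul,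
      Pi.star_apply, RCLike.star_def]
    exact Finset.sum_congr rfl fun _ _ => by ring
  rw [this, dotProduct_smul, smul_eq_mul, mul_comm]

theorem trace_eq_of_outer_add_outer_eq_one [DecidableEq κ] {φ ψ : κ → ℂ}
    (h : outer φ φ + outer ψ ψ = 1) (M : Matrix κ κ ℂ) :
    M.trace = star φ ⬝ᵥ (M *ᵥ φ) + star ψ ⬝ᵥ (M *ᵥ ψ) := by
  conv_lhs => rw [← M.mul_one, ← h]
  simp only [Matrix.mul_add, trace_add, outer_eq_vecMulVec, mul_vecMulVec, trace_vecMulVec,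
    dotProduct_comm _ (star _)]

theorem outer_add_outer_eq_one {φ ψ : Fin 2 → ℂ} (hφ : star φ ⬝ᵥ φ = 1)
    (hψ : star ψ ⬝ᵥ ψ = 1) (hφψ : star φ ⬝ᵥ ψ = 0) : outer φ φ + outer ψ ψ = 1 := by
  set U : Matrix (Fin 2) (Fin 2) ℂ := of fun k l => ![φ, ψ] l k
  have hψφ : star ψ ⬝ᵥ φ = 0 := by rw [star_dotProduct, hφψ, star_zero]
  have hU : Uᴴ * U = 1 := by
    ext l l'
    simp only [dotProduct, Fin.sum_univ_two, Pi.star_apply, RCLike.star_def] at hφ hψ hφψ hψφ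
    fin_cases l <;> fin_cases l' <;> simpa [U, mul_apply]
  ext k k'
  simpa [U, mul_apply, outer, Fin.sum_univ_two] using congr($(mul_eq_one_comm.mp hU) k k')

theorem star_dotProduct_map_outer_mulVec (N : Matrix ι ι ℂ →ₗ[ℂ] Matrix κ κ ℂ)
    (x y : ι → ℂ) (χ χ' : κ → ℂ) :
    star χ' ⬝ᵥ (N (outer x y) *ᵥ χ) = star (choiVec x χ') ⬝ᵥ (choi N *ᵥ choiVec y χ) := by
  simp only [dotProduct, mulVec, map_apply_eq_sum_choi, Fintype.sum_prod_type, Finset.mul_sum,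
    Finset.sum_mul, choiVec, outer, Matrix.of_apply, Pi.star_apply, RCLike.star_def, map_mul,
    Complex.conj_conj]
  conv_lhs =>
    enter [2, p]
    rw [Finset.sum_comm]
    enter [2, a]
    rw [Finset.sum_comm]
  conv_lhs => rw [Finset.sum_comm]
  refine Finset.sum_congr rfl fun a _ => Finset.sum_congr rfl fun p _ =>
    Finset.sum_congr rfl fun b _ => Finset.sum_congr rfl fun q _ => by ring

theorem choi_mulVec_choiVec_eq_zero {β : Type*} [Fintype β]
    {N : Matrix ι ι ℂ →ₗ[ℂ] Matrix κ κ ℂ} (hN : (choi N).PosSemidef)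
    {x : β → ι → ℂ} {χ : κ → ℂ} (h : star χ ⬝ᵥ (N (∑ b, outer (x b) (x b)) *ᵥ χ) = 0)
    (b : β) : choi N *ᵥ choiVec (x b) χ = 0 := by
  simp only [map_sum, Matrix.sum_mulVec, dotProduct_sum, star_dotProduct_map_outer_mulVec] at h
  rw [Finset.sum_eq_zero_iff_of_nonneg fun b _ => hN.dotProduct_mulVec_nonneg _] at h
  exact (hN.dotProduct_mulVec_zero_iff _).1 (h b (Finset.mem_univ b))

theorem star_dotProduct_eq_zero_of_map_sum_outer {β : Type*} [Fintype β]
    {N : Matrix ι ι ℂ →ₗ[ℂ] Matrix (Fin 2) (Fin 2) ℂ} (hN : IsCPTP N) {φ ψ : Fin 2 → ℂ}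
    (hφ : star φ ⬝ᵥ φ = 1) (hψ : star ψ ⬝ᵥ ψ = 1) (hφψ : star φ ⬝ᵥ ψ = 0)
    {x y : β → ι → ℂ} (hx : N (∑ b, outer (x b) (x b)) = outer φ φ)
    (hy : N (∑ b, outer (y b) (y b)) = outer ψ ψ) (b b' : β) : star (y b') ⬝ᵥ x b = 0 := by
  -- By positivity of `choi N`, `N (outer (x b) (y b'))` kills `φ` and has range orthogonal to
  -- `ψ`, so its trace, computed in the basis `φ, ψ`, vanishes.
  have hψφ : star ψ ⬝ᵥ φ = 0 := by rw [star_dotProduct, hφψ, star_zero]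
  have hyφ : choi N *ᵥ choiVec (y b') φ = 0 :=
    choi_mulVec_choiVec_eq_zero hN.1 (by rw [hy, star_dotProduct_outer_mulVec, hφψ, zero_mul]) b'
  have hxψ : choi N *ᵥ choiVec (x b) ψ = 0 :=
    choi_mulVec_choiVec_eq_zero hN.1 (by rw [hx, star_dotProduct_outer_mulVec, hψφ, zero_mul]) b
  have hxψ' : star (choiVec (x b) ψ) ᵥ* choi N = 0 := by
    rw [← hN.1.1.eq, ← star_mulVec, hxψ, star_zero]
  calc star (y b') ⬝ᵥ x b = (N (outer (x b) (y b'))).trace := by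
        rw [hN.2, outer_eq_vecMulVec, trace_vecMulVec, dotProduct_comm]
    _ = 0 := by
        rw [trace_eq_of_outer_add_outer_eq_one (outer_add_outer_eq_one hφ hψ hφψ),
          star_dotProduct_map_outer_mulVec, star_dotProduct_map_outer_mulVec, hyφ,
          dotProduct_mulVec, hxψ', zero_dotProduct, dotProduct_zero, add_zero]

end Choi

section Slices

variable {m : ℕ}

/-- `slice v i b = ⟨b|ᵢ v`; these Kraus operators make up the deletion `ptrace i`
(`ptrace_outer_self`). -/
def slice (v : (Fin (m + 1) → Fin 2) → ℂ) (i : Fin (m + 1)) (b : Fin 2) :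
    EuclideanSpace ℂ (Fin m → Fin 2) :=
  WithLp.toLp 2 fun y => v (i.insertNth b y)

theorem slice_add (u v : (Fin (m + 1) → Fin 2) → ℂ) (i : Fin (m + 1)) (b : Fin 2) :
    slice (u + v) i b = slice u i b + slice v i b := rfl

theorem slice_smul (a : ℂ) (v : (Fin (m + 1) → Fin 2) → ℂ) (i : Fin (m + 1)) (b : Fin 2) :
    slice (a • v) i b = a • slice v i b := rfl

theorem apply_insertNth_eq_of_slice_eq_smul {c : (Fin (m + 1) → Fin 2) → ℂ}
    {i : Fin (m + 1)} {a : Fin 2 → ℂ} {w : EuclideanSpace ℂ (Fin m → Fin 2)}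
    (hc : ∀ b, slice c i b = a b • w) (b : Fin 2) (y : Fin m → Fin 2) :
    c (i.insertNth b y) = a b * w y :=
  congrFun (congrArg WithLp.ofLp (hc b)) y

theorem ptrace_outer_self (v : (Fin (m + 1) → Fin 2) → ℂ) (i : Fin (m + 1)) :
    ptrace i (outer v v) = ∑ b, outer (slice v i b).ofLp (slice v i b).ofLp := by
  ext y y'
  simp [ptrace, outer, slice, Matrix.sum_apply]

theorem mul_outer_mul_conjTranspose {ι : Type*} [Fintype ι] (E : Matrix ι (Fin 2) ℂ)
    (φ : Fin 2 → ℂ) : E * outer φ φ * Eᴴ = outer (E *ᵥ φ) (E *ᵥ φ) := by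
  rw [outer_eq_vecMulVec, mul_vecMulVec, vecMulVec_mul, ← star_mulVec, outer_eq_vecMulVec]

/-- The Knill–Laflamme conditions of the code words `c`, `d` for the Kraus operators `⟨b|ᵢ` of
the single deletions. -/
structure DeletionKL (c d : (Fin (m + 1) → Fin 2) → ℂ) : Prop where
  inner_eq_zero : ∀ i j b b', ⟪slice c i b, slice d j b'⟫_ℂ = 0
  inner_eq_inner : ∀ i b b', ⟪slice c i b, slice c i b'⟫_ℂ = ⟪slice d i b, slice d i b'⟫_ℂ

theorem DeletionKL.symm {c d : (Fin (m + 1) → Fin 2) → ℂ} (h : DeletionKL c d) :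
    DeletionKL d c where
  inner_eq_zero i j b b' := inner_eq_zero_symm.1 (h.inner_eq_zero j i b' b)
  inner_eq_inner i b b' := (h.inner_eq_inner i b b').symm

def CorrectsDeletions (E : Matrix (Fin (m + 1) → Fin 2) (Fin 2) ℂ)
    (N : Matrix (Fin m → Fin 2) (Fin m → Fin 2) ℂ →ₗ[ℂ] Matrix (Fin 2) (Fin 2) ℂ) : Prop :=
  ∀ φ : Fin 2 → ℂ, star φ ⬝ᵥ φ = 1 →
    ∀ i : Fin (m + 1), N (ptrace i (E * outer φ φ * Eᴴ)) = outer φ φ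

variable {E : Matrix (Fin (m + 1) → Fin 2) (Fin 2) ℂ}
  {N : Matrix (Fin m → Fin 2) (Fin m → Fin 2) ℂ →ₗ[ℂ] Matrix (Fin 2) (Fin 2) ℂ}

theorem inner_slice_mulVec_eq_zero (hN : IsCPTP N) (hE : CorrectsDeletions E N)
    {φ ψ : Fin 2 → ℂ} (hφ : star φ ⬝ᵥ φ = 1) (hψ : star ψ ⬝ᵥ ψ = 1)
    (hφψ : star φ ⬝ᵥ ψ = 0) (i j : Fin (m + 1)) (b b' : Fin 2) :
    ⟪slice (E *ᵥ φ) i b, slice (E *ᵥ ψ) j b'⟫_ℂ = 0 := by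
  have hψφ : star ψ ⬝ᵥ φ = 0 := by rw [star_dotProduct, hφψ, star_zero]
  rw [EuclideanSpace.inner_eq_star_dotProduct, dotProduct_comm]
  refine star_dotProduct_eq_zero_of_map_sum_outer hN hψ hφ hψφ
    (x := fun b => (slice (E *ᵥ ψ) j b).ofLp) (y := fun b => (slice (E *ᵥ φ) i b).ofLp)
    ?_ ?_ b' b
  · rw [← ptrace_outer_self, ← mul_outer_mul_conjTranspose, hE ψ hψ j]
  · rw [← ptrace_outer_self, ← mul_outer_mul_conjTranspose, hE φ hφ i]

theorem inner_slice_col_zero_col_one_eq_zero (hN : IsCPTP N) (hE : CorrectsDeletions E N)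
    (i j : Fin (m + 1)) (b b' : Fin 2) :
    ⟪slice (E.col 0) i b, slice (E.col 1) j b'⟫_ℂ = 0 := by
  rw [← mulVec_single_one, ← mulVec_single_one]
  exact inner_slice_mulVec_eq_zero hN hE (by simp) (by simp) (by simp) i j b b'

theorem inner_slice_col_zero_eq_inner_slice_col_one (hN : IsCPTP N)
    (hE : CorrectsDeletions E N) (i j : Fin (m + 1)) (b b' : Fin 2) :
    ⟪slice (E.col 0) i b, slice (E.col 0) j b'⟫_ℂ =
      ⟪slice (E.col 1) i b, slice (E.col 1) j b'⟫_ℂ := by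
  have hmulVec (φ : Fin 2 → ℂ) : E *ᵥ φ = φ 0 • E.col 0 + φ 1 • E.col 1 := by
    ext s; simp [mulVec, dotProduct, Fin.sum_univ_two, mul_comm]
  -- an orthonormal basis mixing the two columns, chosen rational to avoid square roots
  have h := inner_slice_mulVec_eq_zero hN hE (φ := ![3 / 5, 4 / 5]) (ψ := ![4 / 5, -3 / 5])
    (by simp [dotProduct, map_div₀, map_ofNat]; norm_num)
    (by simp [dotProduct, map_div₀, map_ofNat]; norm_num)
    (by simp [dotProduct, map_div₀, map_ofNat]; norm_num) i j b b'
  have h01 := inner_slice_col_zero_col_one_eq_zero hN hE i j b b'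
  have h10 := inner_eq_zero_symm.1 (inner_slice_col_zero_col_one_eq_zero hN hE j i b' b)
  simp only [hmulVec, slice_add, slice_smul, inner_add_left, inner_add_right, inner_smul_left,
    inner_smul_right, h01, h10, Matrix.cons_val_zero, Matrix.cons_val_one, map_div₀,
    map_ofNat] at h
  linear_combination (25 / 12 : ℂ) * h

theorem deletionKL_col (hN : IsCPTP N) (hE : CorrectsDeletions E N) :
    DeletionKL (E.col 0) (E.col 1) where
  inner_eq_zero := inner_slice_col_zero_col_one_eq_zero hN hE
  inner_eq_inner i := inner_slice_col_zero_eq_inner_slice_col_one hN hE i i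

end Slices

section ThreeQubits

theorem insertNth_zero_eq (b : Fin 2) (y : Fin 2 → Fin 2) :
    (0 : Fin 3).insertNth b y = ![b, y 0, y 1] := by
  ext k; fin_cases k <;> rfl

theorem insertNth_one_eq (b : Fin 2) (y : Fin 2 → Fin 2) :
    (1 : Fin 3).insertNth b y = ![y 0, b, y 1] := by
  ext k; fin_cases k <;> rfl

theorem insertNth_two_eq (b : Fin 2) (y : Fin 2 → Fin 2) :
    (2 : Fin 3).insertNth b y = ![y 0, y 1, b] := by
  ext k; fin_cases k <;> rfl

theorem slice_zero_apply (c : (Fin 3 → Fin 2) → ℂ) (b : Fin 2) (y : Fin 2 → Fin 2) :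
    slice c 0 b y = c ![b, y 0, y 1] := by
  rw [← insertNth_zero_eq]; rfl

theorem slice_one_apply (c : (Fin 3 → Fin 2) → ℂ) (b : Fin 2) (y : Fin 2 → Fin 2) :
    slice c 1 b y = c ![y 0, b, y 1] := by
  rw [← insertNth_one_eq]; rfl

theorem slice_two_apply (c : (Fin 3 → Fin 2) → ℂ) (b : Fin 2) (y : Fin 2 → Fin 2) :
    slice c 2 b y = c ![y 0, y 1, b] := by
  rw [← insertNth_two_eq]; rfl

theorem sum_fin_two_arrow (f : (Fin 2 → Fin 2) → ℂ) : ∑ y, f y = ∑ s, ∑ t, f ![s, t] := by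
  rw [← (finTwoArrowEquiv (Fin 2)).symm.sum_comp, Fintype.sum_prod_type]
  rfl

def amplitudeMatrix (w : EuclideanSpace ℂ (Fin 2 → Fin 2)) : Matrix (Fin 2) (Fin 2) ℂ :=
  of fun s t => w ![s, t]

variable {c d : (Fin 3 → Fin 2) → ℂ} {a : Fin 2 → ℂ} {w : EuclideanSpace ℂ (Fin 2 → Fin 2)}

theorem apply_eq_of_slice_zero_eq_smul (hc : ∀ b, slice c 0 b = a b • w) (p q r : Fin 2) :
    c ![p, q, r] = a p * w ![q, r] := by
  simpa [insertNth_zero_eq] using apply_insertNth_eq_of_slice_eq_smul hc p ![q, r]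

theorem apply_eq_of_slice_one_eq_smul (hc : ∀ b, slice c 1 b = a b • w) (p q r : Fin 2) :
    c ![p, q, r] = a q * w ![p, r] := by
  simpa [insertNth_one_eq] using apply_insertNth_eq_of_slice_eq_smul hc q ![p, r]

theorem apply_eq_of_slice_two_eq_smul (hc : ∀ b, slice c 2 b = a b • w) (p q r : Fin 2) :
    c ![p, q, r] = a r * w ![p, q] := by
  simpa [insertNth_two_eq] using apply_insertNth_eq_of_slice_eq_smul hc r ![p, q]

/-- If `c` and `c'` factor across the qubit `i`, their slices across the other qubits `j` and
`j'` are, up to the first factors, the rows and the columns of the amplitude matrices of the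
second factors. -/
theorem exists_inner_slice_eq_of_slice_eq_smul (i : Fin 3) : ∃ j j' : Fin 3,
    ∀ {c c' : (Fin 3 → Fin 2) → ℂ} {a a' : Fin 2 → ℂ}
      {w w' : EuclideanSpace ℂ (Fin 2 → Fin 2)},
      (∀ b, slice c i b = a b • w) → (∀ b, slice c' i b = a' b • w') → ∀ b b',
      ⟪slice c j b, slice c' j b'⟫_ℂ =
          (star a ⬝ᵥ a') * (amplitudeMatrix w' * (amplitudeMatrix w)ᴴ) b' b ∧
        ⟪slice c j' b, slice c' j' b'⟫_ℂ =
          (star a ⬝ᵥ a') * ((amplitudeMatrix w)ᴴ * amplitudeMatrix w') b b' := by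
  obtain rfl | rfl | rfl : i = 0 ∨ i = 1 ∨ i = 2 := by omega
  · refine ⟨1, 2, fun hc hc' b b' => ?_⟩
    simp [EuclideanSpace.inner_eq_star_dotProduct, dotProduct, sum_fin_two_arrow,
      slice_one_apply, slice_two_apply, apply_eq_of_slice_zero_eq_smul hc,
      apply_eq_of_slice_zero_eq_smul hc', amplitudeMatrix, mul_apply, Fin.sum_univ_two]
    constructor <;> ring
  · refine ⟨0, 2, fun hc hc' b b' => ?_⟩
    simp [EuclideanSpace.inner_eq_star_dotProduct, dotProduct, sum_fin_two_arrow,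
      slice_zero_apply, slice_two_apply, apply_eq_of_slice_one_eq_smul hc,
      apply_eq_of_slice_one_eq_smul hc', amplitudeMatrix, mul_apply, Fin.sum_univ_two]
    constructor <;> ring
  · refine ⟨0, 1, fun hc hc' b b' => ?_⟩
    simp [EuclideanSpace.inner_eq_star_dotProduct, dotProduct, sum_fin_two_arrow,
      slice_zero_apply, slice_one_apply, apply_eq_of_slice_two_eq_smul hc,
      apply_eq_of_slice_two_eq_smul hc', amplitudeMatrix, mul_apply, Fin.sum_univ_two]
    constructor <;> ring

theorem DeletionKL.eq_zero_of_not_linearIndependent (h : DeletionKL c d) {i : Fin 3}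
    (hi : ¬LinearIndependent ℂ (slice c i)) : c = 0 := by
  obtain ⟨g, hg, k, hk⟩ := Fintype.not_linearIndependent_iff.1 hi
  have hg0 : g ≠ 0 := fun h => hk (congrFun h k)
  obtain ⟨w, hw⟩ := exists_eq_smul_of_sum_smul_eq_zero hg0 hg
  obtain ⟨w', hw'⟩ := exists_eq_smul_of_sum_smul_eq_zero hg0
    (sum_smul_eq_zero_of_inner_eq (h.inner_eq_inner i) hg)
  have ha : star ![-g 1, g 0] ⬝ᵥ ![-g 1, g 0] ≠ 0 := by
    rw [Ne, dotProduct_star_self_eq_zero]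
    intro ha
    exact hg0 (funext fun k => by
      fin_cases k
      exacts [by simpa using congrFun ha 1, by simpa using congrFun ha 0])
  obtain ⟨j, j', hjj'⟩ := exists_inner_slice_eq_of_slice_eq_smul i
  have hrows : amplitudeMatrix w * (amplitudeMatrix w)ᴴ =
      amplitudeMatrix w' * (amplitudeMatrix w')ᴴ := by
    ext b b'
    refine mul_left_cancel₀ ha ?_
    rw [← (hjj' hw hw b' b).1, ← (hjj' hw' hw' b' b).1, h.inner_eq_inner]
  have hcols : (amplitudeMatrix w)ᴴ * amplitudeMatrix w' = 0 := by
    ext b b'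
    refine mul_left_cancel₀ ha ?_
    rw [← (hjj' hw hw' b b').2, h.inner_eq_zero, Matrix.zero_apply, mul_zero]
  have hw0 : w = 0 := by
    ext y
    have hy : ![y 0, y 1] = y := by ext k; fin_cases k <;> rfl
    simpa [amplitudeMatrix, hy] using
      congr($(eq_zero_of_mul_conjTranspose_eq_of_conjTranspose_mul_eq_zero hrows hcols)
        (y 0) (y 1))
  ext x
  rw [← Fin.insertNth_self_removeNth i x, apply_insertNth_eq_of_slice_eq_smul hw, hw0]
  simp

theorem apply_eq_apply_cycle_of_slice_mem_span
    (h₁ : ∀ b, slice c 1 b ∈ Submodule.span ℂ (Set.range (slice c 0)))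
    (h₂ : ∀ b, slice c 2 b ∈ Submodule.span ℂ (Set.range (slice c 0)))
    (hind : LinearIndependent ℂ (slice c 2)) (p q r : Fin 2) :
    c ![p, q, r] = c ![q, r, p] := by
  choose M hM using fun u => (Submodule.mem_span_range_iff_exists_fun ℂ).1 (h₁ u)
  choose N hN using fun u => (Submodule.mem_span_range_iff_exists_fun ℂ).1 (h₂ u)
  -- swapping the first two qubits acts on `c` as `M` on the first qubit
  have hM' : ∀ p u r, c ![p, u, r] = M u 0 * c ![0, p, r] + M u 1 * c ![1, p, r] := by
    intro p u r
    simpa [slice_zero_apply, slice_one_apply, Fin.sum_univ_two] using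
      congr($(hM u).ofLp ![p, r]).symm
  have hN' : ∀ p q u, c ![p, q, u] = N u 0 * c ![0, p, q] + N u 1 * c ![1, p, q] := by
    intro p q u
    simpa [slice_zero_apply, slice_two_apply, Fin.sum_univ_two] using
      congr($(hN u).ofLp ![p, q]).symm
  have hNunit : IsUnit (of N) := by
    have hcomp : Fintype.linearCombination ℂ (slice c 0) ∘ (fun u => of N u) = slice c 2 := by
      ext u : 1
      simp [Fintype.linearCombination_apply, hN u]
    exact linearIndependent_rows_iff_isUnit.1 (LinearIndependent.of_comp _ (hcomp ▸ hind))
  -- hence swapping the last two qubits acts on `c` as `M` on the second qubit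
  have hM'' : ∀ l p q, c ![l, p, q] = M q 0 * c ![l, 0, p] + M q 1 * c ![l, 1, p] := by
    intro l p q
    have key := mulVec_injective_iff_isUnit.2 hNunit (a₁ := fun l =>
      c ![l, p, q] - (M q 0 * c ![l, 0, p] + M q 1 * c ![l, 1, p])) (a₂ := 0) (by
      ext u
      simp only [mulVec, dotProduct, Fin.sum_univ_two, of_apply, Pi.zero_apply]
      linear_combination -hN' p q u + M q 0 * hN' 0 p u + M q 1 * hN' 1 p u + hM' p q u)
    exact sub_eq_zero.1 (congrFun key l)
  -- both sides expand to `∑ k m, M q k * M r m * c ![k, m, p]`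
  linear_combination hM' p q r + M q 0 * hM'' 0 p r + M q 1 * hM'' 1 p r - hM' q r p -
    M r 0 * hM' 0 q p - M r 1 * hM' 1 q p

theorem slice_zero_apply_eq_of_apply_eq_apply_cycle
    (hc : ∀ p q r, c ![p, q, r] = c ![q, r, p]) (b : Fin 2) :
    slice c 0 b ![0, 1] = slice c 0 b ![1, 0] := by
  simp only [slice_zero_apply, Matrix.cons_val_zero, Matrix.cons_val_one]
  fin_cases b
  · exact hc 0 0 1
  · exact (hc 1 0 1).trans (hc 0 1 1)

theorem DeletionKL.slice_mem_span (h : DeletionKL c d) (hc : LinearIndependent ℂ (slice c 0))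
    (hd : LinearIndependent ℂ (slice d 0)) (j : Fin 3) (b : Fin 2) :
    slice c j b ∈ Submodule.span ℂ (Set.range (slice c 0)) := by
  rw [span_range_eq_orthogonal hc hd (h.inner_eq_zero 0 0) (by simp)]
  refine Submodule.isOrtho_iff_le.1 (Submodule.isOrtho_span.2 ?_)
    (Submodule.mem_span_singleton_self (slice c j b))
  rintro _ rfl _ ⟨l, rfl⟩
  exact h.inner_eq_zero j 0 b l

theorem DeletionKL.eq_zero (h : DeletionKL c d) : c = 0 := by
  by_contra hc
  have hind (i : Fin 3) : LinearIndependent ℂ (slice c i) :=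
    by_contra fun hi => hc (h.eq_zero_of_not_linearIndependent hi)
  have hind' (i : Fin 3) : LinearIndependent ℂ (slice d i) :=
    (linearIndependent_iff_of_inner_eq (h.inner_eq_inner i)).1 (hind i)
  have hcyc := apply_eq_apply_cycle_of_slice_mem_span (h.slice_mem_span (hind 0) (hind' 0) 1)
    (h.slice_mem_span (hind 0) (hind' 0) 2) (hind 2)
  have hcyc' := apply_eq_apply_cycle_of_slice_mem_span
    (h.symm.slice_mem_span (hind' 0) (hind 0) 1) (h.symm.slice_mem_span (hind' 0) (hind 0) 2)
    (hind' 2)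
  -- `f` vanishes exactly on the symmetric two-qubit vectors
  set f : EuclideanSpace ℂ (Fin 2 → Fin 2) →ₗ[ℂ] ℂ :=
    EuclideanSpace.projₗ ![0, 1] - EuclideanSpace.projₗ ![1, 0]
  have hle {e : (Fin 3 → Fin 2) → ℂ} (he : ∀ p q r, e ![p, q, r] = e ![q, r, p]) :
      Submodule.span ℂ (Set.range (slice e 0)) ≤ LinearMap.ker f := by
    rw [Submodule.span_le]
    rintro _ ⟨b, rfl⟩
    simp [f, slice_zero_apply_eq_of_apply_eq_apply_cycle he b]
  have htop : Submodule.span ℂ (Set.range (slice d 0)) ⊔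
      Submodule.span ℂ (Set.range (slice c 0)) = ⊤ := by
    rw [span_range_eq_orthogonal (hind 0) (hind' 0) (h.inner_eq_zero 0 0) (by simp)]
    exact Submodule.sup_orthogonal_of_hasOrthogonalProjection
  have := (htop ▸ sup_le (hle hcyc') (hle hcyc))
    (Submodule.mem_top (x := EuclideanSpace.single ![0, 1] 1))
  simp [f] at this

end ThreeQubits

/-- there is no `[3,1]` single quantum deletion error-correcting code. -/
theorem no_length_three_deletion_code : ¬ HasDelCode 2 := by
  rintro ⟨E, N, hE, hN, hdec⟩
  exact E.col_ne_zero_of_conjTranspose_mul_self_eq_one hE 0 (deletionKL_col hN hdec).eq_zero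

end
end

section
/- Every received word of the code Q₄ after a single deletion is invariant under all permutations of the three remaining qubit positions: for all α, β ∈ ℂ, every i ∈ {1,2,3,4}, and every permutation σ of {1,2,3}, P_σ · Tr_i(|Φ⟩⟨Φ|) · P_σ† = Tr_i(|Φ⟩⟨Φ|), where |Φ⟩ := (α/√2)(|0000⟩+|1111⟩) + (β/√6)(|0011⟩+|0101⟩+|0110⟩+|1001⟩+|1010⟩+|1100⟩). -/
/- Common setup: (ℂ²)^{⊗n} is modeled as functions {0,1}ⁿ → ℂ, with computational
basis kets, outer products |u⟩⟨v|, and the partial trace over the i-th tensor factor. -/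

open Matrix
open scoped ComplexConjugate ComplexOrder

noncomputable section

/-- The unitary `P_σ` on `(ℂ²)^{⊗n}` permuting the tensor factors:
`P_σ|x₁…xₙ⟩ = |x_{σ⁻¹(1)}…x_{σ⁻¹(n)}⟩` on computational basis states. -/
def permMat {n : ℕ} (σ : Equiv.Perm (Fin n)) :
    Matrix (Fin n → Fin 2) (Fin n → Fin 2) ℂ :=
  Matrix.of fun x y => if x = fun j => y (σ⁻¹ j) then 1 else 0

def phiFun (α β : ℂ) (k : ℕ) : ℂ :=
  if k = 0 ∨ k = 4 then α / (Real.sqrt 2 : ℂ)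
  else if k = 2 then β / (Real.sqrt 6 : ℂ) else 0

lemma Phi_apply (α β : ℂ) (v : Fin 4 → Fin 2) :
    Phi α β v = phiFun α β (∑ j, ((v j : ℕ))) := by
  have hv : v = ![v 0, v 1, v 2, v 3] := by
    funext j; fin_cases j <;> rfl
  rw [hv]
  generalize v 0 = a; generalize v 1 = b; generalize v 2 = c; generalize v 3 = d
  fin_cases a <;> fin_cases b <;> fin_cases c <;> fin_cases d <;>
    simp (config := { decide := true }) [Phi, ket, phiFun, Fin.sum_univ_four]

lemma sum_insertNth (i : Fin 4) (b : Fin 2) (y : Fin 3 → Fin 2) :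
    ∑ j, (i.insertNth (α := fun _ => Fin 2) b y j).val = (b : ℕ) + ∑ j, (y j).val := by
  rw [Fin.sum_univ_succAbove (fun j => (i.insertNth (α := fun _ => Fin 2) b y j).val) i]
  simp

lemma ptrace_outer_apply (α β : ℂ) (i : Fin 4) (y y' : Fin 3 → Fin 2) :
    ptrace i (outer (Phi α β) (Phi α β)) y y'
      = ∑ b : Fin 2, phiFun α β ((b : ℕ) + ∑ j, (y j).val)
          * conj (phiFun α β ((b : ℕ) + ∑ j, (y' j).val)) := by
  simp [ptrace, outer, Phi_apply, sum_insertNth]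

/-- every received word of `Q₄` after a single deletion is invariant
under all permutations of the three remaining qubit positions:
`P_σ · Tr_i(|Φ⟩⟨Φ|) · P_σ† = Tr_i(|Φ⟩⟨Φ|)`. -/
theorem received_word_permutation_invariant (α β : ℂ) (i : Fin 4)
    (σ : Equiv.Perm (Fin 3)) :
    permMat σ * ptrace i (outer (Phi α β) (Phi α β)) * (permMat σ)ᴴ
      = ptrace i (outer (Phi α β) (Phi α β)) := by
  ext x y
  have h1 : ∀ (A : Matrix (Fin 3 → Fin 2) (Fin 3 → Fin 2) ℂ),
      (permMat σ * A * (permMat σ)ᴴ) x y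
        = A (fun j => x (σ j)) (fun j => y (σ j)) := by
    intro A
    have key : ∀ w : Fin 3 → Fin 2,
        (x = fun j => w (σ⁻¹ j)) ↔ (w = fun j => x (σ j)) := by
      intro w
      constructor <;> intro h <;> subst h <;> funext j <;> simp
    have key' : ∀ w : Fin 3 → Fin 2,
        (y = fun j => w (σ⁻¹ j)) ↔ (w = fun j => y (σ j)) := by
      intro w
      constructor <;> intro h <;> subst h <;> funext j <;> simp
    simp only [Matrix.mul_apply, permMat, Matrix.conjTranspose_apply, Matrix.of_apply,
      key, key']
    simp [Finset.sum_ite_eq', Finset.mul_sum, mul_comm]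
  rw [h1]
  rw [ptrace_outer_apply, ptrace_outer_apply]
  have hx : ∑ j, (x (σ j)).val = ∑ j, (x j).val :=
    Equiv.sum_comp σ (fun j => (x j).val)
  have hy : ∑ j, (y (σ j)).val = ∑ j, (y j).val :=
    Equiv.sum_comp σ (fun j => (y j).val)
  rw [hx, hy]

end
end
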